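/- arXiv:1107.4269 — 2 statements merged into one kernel-verified Lean document; each statement's English description precedes it below -/
import Mathlib

section
/- Termination of difference reduction: let ≻ be an admissible ordering on difference monomials and let F̃ be a finite set of monic nonzero difference polynomials. Then there is no infinite chain of elementary reduction steps modulo F̃ starting from any polynomial p; consequently every p ∈ R reaches, after finitely many reduction steps modulo F̃, a polynomial in normal form modulo F̃ (in particular normal forms modulo F̃ exist for every p). -/
/-- The free commutative monoid of shifts `Θ`. -/
abbrev Shift (n : ℕ) := Fin n → ℕ

/-- The set of difference variables `V = Θ × Fin m`. -/
abbrev DVar (n m : ℕ) := (Fin n → ℕ) × Fin m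

/-- The additive commutative monoid of difference monomials `M = V →₀ ℕ`. -/
abbrev DMon (n m : ℕ) := DVar n m →₀ ℕ

/-- Action of a shift `θ` on a difference variable: `θ • (θ', α) = (θ + θ', α)`. -/
def shiftV {n m : ℕ} (θ : Shift n) (v : DVar n m) : DVar n m := (θ + v.1, v.2)

/-- Action of a shift `θ` on a difference monomial. -/
noncomputable def shiftM {n m : ℕ} (θ : Shift n) (w : DMon n m) : DMon n m :=
  Finsupp.mapDomain (shiftV θ) w

/-- Divisibility of difference monomials: `v ∣ w` iff `w = t + θ • v`. -/
def MDvd {n m : ℕ} (v w : DMon n m) : Prop :=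
  ∃ (t : DMon n m) (θ : Shift n), w = t + shiftM θ v

/-- The action of the shift `θ` on the difference polynomial ring
`R = MvPolynomial (DVar n m) K`: the ring endomorphism `σ^θ` applying the given
endomorphism `σK θ` of `K` to coefficients and `θ • ·` to variables. -/
noncomputable def sigmaR {n m : ℕ} {K : Type} [Field K] (σK : Shift n → (K →+* K))
    (θ : Shift n) :
    MvPolynomial (DVar n m) K →+* MvPolynomial (DVar n m) K :=
  MvPolynomial.eval₂Hom (MvPolynomial.C.comp (σK θ)) fun v => MvPolynomial.X (shiftV θ v)

/-- An admissible ordering on difference monomials: a (strict) linear order `lt` such that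
`m ≻ 0` for `m ≠ 0`, compatible with addition of monomials and the action of shifts,
and extending a ranking on the variables. -/
structure Admissible (n m : ℕ) where
  lt : DMon n m → DMon n m → Prop
  irrefl : ∀ a, ¬ lt a a
  trans : ∀ a b c, lt a b → lt b c → lt a c
  trichotomy : ∀ a b, lt a b ∨ a = b ∨ lt b a
  pos : ∀ a : DMon n m, a ≠ 0 → lt 0 a
  compat : ∀ (v w t : DMon n m) (θ : Shift n), lt v w ↔ lt (t + shiftM θ v) (t + shiftM θ w)
  ranking : ∀ (θ : Shift n) (i : Fin n) (α : Fin m),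
    lt (Finsupp.single (θ, α) 1) (Finsupp.single (θ + Pi.single i 1, α) 1)

/-- `w` is the leading monomial of `f` w.r.t. the ordering `ord`:
it occurs in `f` and is `ord`-greater than any other monomial of `f`. -/
def IsLm {n m : ℕ} {K : Type} [Field K] (ord : Admissible n m)
    (f : MvPolynomial (DVar n m) K) (w : DMon n m) : Prop :=
  w ∈ f.support ∧ ∀ w' ∈ f.support, w' ≠ w → ord.lt w' w

/-- `f` is monic: its leading coefficient equals `1`. -/
def IsMonicP {n m : ℕ} {K : Type} [Field K] (ord : Admissible n m)
    (f : MvPolynomial (DVar n m) K) : Prop :=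
  ∃ w, IsLm ord f w ∧ f.coeff w = 1

/-- Elementary reduction step modulo the set `F`: for some `q ∈ F` with leading monomial
`lq`, and a monomial `w = t + θ • lq` occurring in `p` with coefficient `c`, subtract
`c · X^t · σ^θ(q)` from `p`, thereby removing the monomial `w`. -/
def RedStep {n m : ℕ} {K : Type} [Field K] (σK : Shift n → (K →+* K)) (ord : Admissible n m)
    (F : Set (MvPolynomial (DVar n m) K)) (p r : MvPolynomial (DVar n m) K) : Prop :=
  ∃ q ∈ F, ∃ lq, IsLm ord q lq ∧ ∃ (t : DMon n m) (θ : Shift n),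
    (t + shiftM θ lq) ∈ p.support ∧
    r = p - MvPolynomial.monomial t (p.coeff (t + shiftM θ lq)) * sigmaR σK θ q

/-- `r` is in normal form modulo `F`: no monomial of `r` is divisible by the
leading monomial of any element of `F`. -/
def InNormalForm {n m : ℕ} {K : Type} [Field K] (ord : Admissible n m)
    (F : Set (MvPolynomial (DVar n m) K)) (r : MvPolynomial (DVar n m) K) : Prop :=
  ∀ w ∈ r.support, ¬ ∃ q ∈ F, ∃ lq, IsLm ord q lq ∧ MDvd lq w

/-! An admissible ordering is a well-order. Indeed, the difference variables are
well-quasi-ordered by "is a shift of" (Dickson's lemma for `ℕⁿ` times a finite set), the ranking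
axiom makes the ordering monotone along this relation, and Higman's lemma
(`Set.IsPWO.addSubmonoid_closure`) carries well-quasi-ordering over to all monomials, which are
sums of variables.

An elementary reduction step modulo `q` deletes a monomial `w = t + θ • lm(q)` of `p` and can only
create monomials `t + θ • s` with `s ≺ lm(q)`, which lie below `w` by compatibility; monicity
of `q` is what makes `w` cancel. Hence the support decreases in the Dershowitz–Manna ordering
of multisets, which is well-founded over a well-order. Normal forms are the minimal elements of
the set of reducts of `p`. -/

lemma shiftM_zero {n m : ℕ} (w : DMon n m) : shiftM 0 w = w := by
  have : shiftV (m := m) (0 : Shift n) = id := funext fun v => by simp [shiftV]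
  rw [shiftM, this, Finsupp.mapDomain_id]

namespace Admissible

variable {n m : ℕ} (ord : Admissible n m)

/-- `DMon n m` already carries the pointwise order of `Finsupp`, so the admissible ordering
lives on a type synonym. -/
def Mon (_ : Admissible n m) : Type := DMon n m

noncomputable instance : AddCommMonoid ord.Mon := inferInstanceAs (AddCommMonoid (DMon n m))

noncomputable def toMon : DMon n m ≃+ ord.Mon := AddEquiv.refl _

instance : IsStrictTotalOrder ord.Mon ord.lt where
  irrefl := ord.irrefl
  trans := ord.trans
  trichotomous a b := by
    rcases ord.trichotomy a b with h | h | h <;> simp [h]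

noncomputable instance : LinearOrder ord.Mon :=
  @linearOrderOfSTO _ ord.lt _ fun _ _ => Classical.propDecidable _

variable {ord}

lemma toMon_lt_toMon {a b : DMon n m} : ord.toMon a < ord.toMon b ↔ ord.lt a b := Iff.rfl

lemma add_lt_add_iff_left (a b c : DMon n m) : ord.lt (c + a) (c + b) ↔ ord.lt a b := by
  simpa only [shiftM_zero] using (ord.compat a b c 0).symm

instance : IsCancelAdd ord.Mon := inferInstanceAs (IsCancelAdd (DMon n m))

instance : IsOrderedCancelAddMonoid ord.Mon where
  add_le_add_left a b h c := by
    rcases h.lt_or_eq with h | rfl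
    · exact le_of_lt (by rw [add_comm a, add_comm b]; exact (add_lt_add_iff_left a b c).2 h)
    · rfl
  le_of_add_le_add_left a b c h := by
    rcases h.lt_or_eq with h | h
    · exact le_of_lt ((add_lt_add_iff_left b c a).1 h)
    · exact (add_left_cancel h).le

lemma Mon.zero_le (a : ord.Mon) : 0 ≤ a := by
  rcases eq_or_ne a 0 with rfl | h
  · rfl
  · exact le_of_lt (toMon_lt_toMon.2 (ord.pos a h))

lemma monotone_toMon_single_shift (α : Fin m) :
    Monotone fun θ : Shift n => ord.toMon (Finsupp.single (θ, α) 1) := by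
  classical
  refine (monotone_iff_forall_covBy _).2 fun θ θ' h => le_of_lt ?_
  obtain ⟨i, hi, hj⟩ := Pi.covBy_iff.1 h
  have : θ' = θ + Pi.single i 1 := by
    funext j
    rcases eq_or_ne j i with rfl | hji
    · simpa [eq_comm] using Nat.covBy_iff_add_one_eq.1 hi
    · simp [hj j hji, hji]
  subst this
  exact toMon_lt_toMon.2 (ord.ranking θ i α)

lemma isPWO_range_toMon_single :
    (Set.range fun v : DVar n m => ord.toMon (Finsupp.single v 1)).IsPWO := by
  rw [← Set.image_univ]
  have hvar : WellQuasiOrdered fun a b : DVar n m => a.1 ≤ b.1 ∧ a.2 = b.2 :=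
    wellQuasiOrdered_le.prod (Finite.wellQuasiOrdered _)
  refine (Set.partiallyWellOrderedOn_univ_iff.2 hvar).image_of_monotone_on ?_
  rintro ⟨θ, α⟩ - ⟨θ', α'⟩ - ⟨hθ, rfl : α = α'⟩
  exact monotone_toMon_single_shift α hθ

lemma closure_range_toMon_single :
    AddSubmonoid.closure (Set.range fun v : DVar n m => ord.toMon (Finsupp.single v 1)) = ⊤ := by
  refine (AddSubmonoid.eq_top_iff' _).2 fun x => ?_
  obtain ⟨w, rfl⟩ := ord.toMon.surjective x
  induction w using Finsupp.induction with
  | zero => exact (map_zero ord.toMon).symm ▸ zero_mem _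
  | single_add v k w _ _ ih =>
    rw [map_add, ← Finsupp.smul_single_one, map_nsmul]
    exact add_mem (nsmul_mem (AddSubmonoid.subset_closure (Set.mem_range_self v)) k) ih

instance : WellFoundedLT ord.Mon := by
  have := isPWO_range_toMon_single.addSubmonoid_closure fun x _ => Mon.zero_le (ord := ord) x
  rw [closure_range_toMon_single, AddSubmonoid.coe_top, Set.isPWO_univ_iff] at this
  infer_instance

end Admissible

theorem Finset.isDershowitzMannaLT_val {α : Type*} [Preorder α] [DecidableEq α]
    {s t : Finset α} {a : α} (hat : a ∈ t) (has : a ∉ s) (h : ∀ b ∈ s, b ∉ t → b < a) :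
    Multiset.IsDershowitzMannaLT s.val t.val := by
  refine ⟨(s ∩ t).val, (s \ t).val, (t \ s).val, ?_, ?_, ?_, ?_⟩
  · rw [Multiset.empty_eq_zero, Ne, Finset.val_eq_zero]
    exact Finset.ne_empty_of_mem (Finset.mem_sdiff.2 ⟨hat, has⟩)
  · rw [add_comm, Finset.sdiff_val, Finset.inter_val, Multiset.sub_add_inter]
  · rw [add_comm, Finset.sdiff_val, Finset.inter_val, Multiset.inter_comm, Multiset.sub_add_inter]
  · intro b hb
    obtain ⟨hbs, hbt⟩ := Finset.mem_sdiff.1 hb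
    exact ⟨a, Finset.mem_sdiff.2 ⟨hat, has⟩, h b hbs hbt⟩

section Reduction

open MvPolynomial

variable {n m : ℕ} {K : Type} [Field K] (σK : Shift n → (K →+* K))

lemma shiftV_injective (θ : Shift n) : Function.Injective (shiftV (m := m) θ) := by
  rintro ⟨a, α⟩ ⟨b, β⟩ h
  simpa [shiftV] using h

lemma sigmaR_eq_rename_comp_map (θ : Shift n) :
    sigmaR (m := m) σK θ = (rename (shiftV θ)).toRingHom.comp (map (σK θ)) := by
  apply ringHom_ext <;> intro <;> simp [sigmaR]

lemma coeff_sigmaR_shiftM (θ : Shift n) (q : MvPolynomial (DVar n m) K) (w : DMon n m) :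
    (sigmaR σK θ q).coeff (shiftM θ w) = σK θ (q.coeff w) := by
  rw [sigmaR_eq_rename_comp_map, RingHom.comp_apply, AlgHom.toRingHom_eq_coe, RingHom.coe_coe,
    shiftM, coeff_rename_mapDomain _ (shiftV_injective θ), coeff_map]

lemma support_sigmaR_subset (θ : Shift n) (q : MvPolynomial (DVar n m) K) :
    (sigmaR σK θ q).support ⊆ q.support.image (shiftM θ) := by
  classical
  rw [sigmaR_eq_rename_comp_map, RingHom.comp_apply, AlgHom.toRingHom_eq_coe, RingHom.coe_coe,
    support_rename_of_injective (shiftV_injective θ)]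
  exact Finset.image_subset_image (support_map_subset _ _)

lemma coeff_monomial_mul_sigmaR (t : DMon n m) (c : K) (θ : Shift n)
    (q : MvPolynomial (DVar n m) K) (s : DMon n m) :
    (monomial t c * sigmaR σK θ q).coeff (t + shiftM θ s) = c * σK θ (q.coeff s) := by
  rw [coeff_monomial_mul, coeff_sigmaR_shiftM]

lemma support_monomial_mul_sigmaR_subset (t : DMon n m) (c : K) (θ : Shift n)
    (q : MvPolynomial (DVar n m) K) :
    (monomial t c * sigmaR σK θ q).support ⊆ q.support.image (t + shiftM θ ·) := by
  classical
  intro u hu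
  obtain ⟨a, ha, b, hb, rfl⟩ := Finset.mem_add.1 (support_mul _ _ hu)
  obtain rfl := Finset.mem_singleton.1 (support_monomial_subset ha)
  obtain ⟨s, hs, rfl⟩ := Finset.mem_image.1 (support_sigmaR_subset σK θ q hb)
  exact Finset.mem_image_of_mem _ hs

variable {ord : Admissible n m}

lemma IsLm.eq {q : MvPolynomial (DVar n m) K} {w w' : DMon n m}
    (h : IsLm ord q w) (h' : IsLm ord q w') : w = w' := by
  by_contra hne
  exact ord.irrefl _ (ord.trans _ _ _ (h.2 w' h'.1 (Ne.symm hne)) (h'.2 w h.1 hne))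

variable {σK} {F : Set (MvPolynomial (DVar n m) K)} {p r : MvPolynomial (DVar n m) K}

lemma RedStep.exists_removed_monomial (hF : ∀ f ∈ F, IsMonicP ord f)
    (h : RedStep σK ord F p r) :
    ∃ w ∈ p.support, w ∉ r.support ∧ ∀ u ∈ r.support, u ∉ p.support → ord.lt u w := by
  obtain ⟨q, hqF, lq, hlq, t, θ, hw, rfl⟩ := h
  obtain ⟨lq', hlq', hlc⟩ := hF q hqF
  rw [hlq'.eq hlq] at hlc
  have hw_removed : t + shiftM θ lq ∉
      (p - monomial t (p.coeff (t + shiftM θ lq)) * sigmaR σK θ q).support := by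
    rw [mem_support_iff, not_not, coeff_sub, coeff_monomial_mul_sigmaR, hlc, map_one, mul_one,
      sub_self]
  refine ⟨_, hw, hw_removed, fun u hu hup => ?_⟩
  have hu_new : u ∈ (monomial t (p.coeff (t + shiftM θ lq)) * sigmaR σK θ q).support := by
    rw [mem_support_iff, coeff_sub, notMem_support_iff.1 hup, zero_sub, neg_ne_zero] at hu
    exact mem_support_iff.2 hu
  obtain ⟨s, hs, rfl⟩ := Finset.mem_image.1 (support_monomial_mul_sigmaR_subset σK _ _ _ _ hu_new)
  have hslq : s ≠ lq := by
    rintro rfl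
    exact hw_removed hu
  exact (ord.compat s lq t θ).1 (hlq.2 s hs hslq)

lemma RedStep.isDershowitzMannaLT (hF : ∀ f ∈ F, IsMonicP ord f) (h : RedStep σK ord F p r) :
    Multiset.IsDershowitzMannaLT (r.support.map ord.toMon.toEmbedding).val
      (p.support.map ord.toMon.toEmbedding).val := by
  classical
  obtain ⟨w, hwp, hwr, hlt⟩ := h.exists_removed_monomial hF
  set e : DMon n m ↪ ord.Mon := ord.toMon.toEmbedding
  refine Finset.isDershowitzMannaLT_val (a := e w) (Finset.mem_map_of_mem e hwp)
    (by rwa [Finset.mem_map' e]) (Finset.forall_mem_map.2 fun u hu hup => ?_)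
  exact hlt u hu (by rwa [Finset.mem_map' e] at hup)

theorem wellFounded_redStep (hF : ∀ f ∈ F, IsMonicP ord f) :
    WellFounded (flip (RedStep σK ord F)) :=
  Subrelation.wf (fun h => h.isDershowitzMannaLT hF)
    (InvImage.wf (fun p : MvPolynomial (DVar n m) K => (p.support.map ord.toMon.toEmbedding).val)
      Multiset.wellFounded_isDershowitzMannaLT)

lemma exists_redStep_of_not_inNormalForm (h : ¬ InNormalForm ord F p) :
    ∃ r, RedStep σK ord F p r := by
  simp only [InNormalForm, not_forall, not_not] at h
  obtain ⟨w, hw, q, hqF, lq, hlq, t, θ, rfl⟩ := h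
  exact ⟨_, q, hqF, lq, hlq, t, θ, hw, rfl⟩

theorem exists_reflTransGen_redStep_inNormalForm (hF : ∀ f ∈ F, IsMonicP ord f)
    (p : MvPolynomial (DVar n m) K) :
    ∃ r, Relation.ReflTransGen (RedStep σK ord F) p r ∧ InNormalForm ord F r := by
  obtain ⟨r, hpr, hmin⟩ :=
    (wellFounded_redStep hF).has_min {r | Relation.ReflTransGen (RedStep σK ord F) p r} ⟨p, .refl⟩
  refine ⟨r, hpr, by_contra fun hnf => ?_⟩
  obtain ⟨r', hrr'⟩ := exists_redStep_of_not_inNormalForm (σK := σK) hnf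
  exact hmin r' (hpr.tail hrr') hrr'

end Reduction

theorem reduction_terminates_general (n m : ℕ)
    (K : Type) [Field K] (σK : Shift n → (K →+* K))
    (ord : Admissible n m)
    (F : Finset (MvPolynomial (DVar n m) K))
    (hF : ∀ f ∈ F, f ≠ 0 ∧ IsMonicP ord f) :
    (¬ ∃ c : ℕ → MvPolynomial (DVar n m) K,
        ∀ k : ℕ, RedStep σK ord (↑F) (c k) (c (k + 1))) ∧
    (∀ p : MvPolynomial (DVar n m) K,
      ∃ r, Relation.ReflTransGen (RedStep σK ord (↑F)) p r ∧ InNormalForm ord (↑F) r) := by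
  have hmonic : ∀ f ∈ (F : Set (MvPolynomial (DVar n m) K)), IsMonicP ord f :=
    fun f hf => (hF f hf).2
  refine ⟨fun ⟨c, hc⟩ => ?_, exists_reflTransGen_redStep_inNormalForm hmonic⟩
  exact (wellFounded_iff_isEmpty_descending_chain.1 (wellFounded_redStep hmonic)).false ⟨c, hc⟩

/-- Termination of difference reduction: modulo a finite set `F` of monic nonzero
difference polynomials there is no infinite chain of elementary reduction steps, and
consequently every polynomial reduces in finitely many steps to a normal form modulo `F`. -/
theorem reduction_terminates (n m : ℕ) (hn : 1 ≤ n) (hm : 1 ≤ m)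
    (K : Type) [Field K] (σK : Shift n → (K →+* K))
    (hσ0 : σK 0 = RingHom.id K)
    (hσadd : ∀ a b : Shift n, σK (a + b) = (σK a).comp (σK b))
    (ord : Admissible n m)
    (F : Finset (MvPolynomial (DVar n m) K))
    (hF : ∀ f ∈ F, f ≠ 0 ∧ IsMonicP ord f) :
    (¬ ∃ c : ℕ → MvPolynomial (DVar n m) K,
        ∀ k : ℕ, RedStep σK ord (↑F) (c k) (c (k + 1))) ∧
    (∀ p : MvPolynomial (DVar n m) K,
      ∃ r, Relation.ReflTransGen (RedStep σK ord (↑F)) p r ∧ InNormalForm ord (↑F) r) :=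
  reduction_terminates_general n m K σK ord F hF
end

section
/- In the ordinary difference polynomial ring R with g₁ := u₀·u₂ − x·u₁, the polynomial g₅ := u₅ − ((x+3)/(x·(x+1)))·u₀·u₄ belongs to the difference ideal [g₁]. -/
/-- The ordinary difference polynomial ring `R = ℚ(x){u}`: polynomials in the
variables `u_k = u(x+k)`, `k ∈ ℕ`, over the field `ℚ(x)` of rational functions. -/
noncomputable abbrev ODiffRing := MvPolynomial ℕ (RatFunc ℚ)

/-- The shift endomorphism `σ` of `R` determined by `σ(u_k) = u_{k+1}` together with
the field endomorphism `φ` of `ℚ(x)` (sending `x` to `x+1`) on coefficients. -/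
noncomputable def sigmaO (φ : RatFunc ℚ →+* RatFunc ℚ) : ODiffRing →+* ODiffRing :=
  MvPolynomial.eval₂Hom (MvPolynomial.C.comp φ) fun k => MvPolynomial.X (k + 1)

/-- The difference ideal `[f]` generated by `f ∈ R`: the ideal of `R` generated by
the set `{σ^k(f) : k ∈ ℕ}`. -/
noncomputable def diffIdealO (φ : RatFunc ℚ →+* RatFunc ℚ) (f : ODiffRing) :
    Ideal ODiffRing :=
  Ideal.span { g | ∃ k : ℕ, g = (⇑(sigmaO φ))^[k] f }

/-- `g₁ = u₀·u₂ − x·u₁`. -/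
noncomputable def gOne : ODiffRing :=
  MvPolynomial.X 0 * MvPolynomial.X 2 - MvPolynomial.C RatFunc.X * MvPolynomial.X 1

/-! Modulo `[g₁]` we have `u_k u_{k+2} = (x+k) u_{k+1}`. Solving for the later variables gives,
formally, `u₅ = (x+2)(x+3)/u₂` and `u₀u₄ = x(x+1)(x+2)/u₂`, whence `u₅ = (x+3)/(x(x+1)) · u₀u₄`.
Clearing denominators turns this into an explicit combination of `σ⁰g₁, …, σ⁴g₁` with polynomial
coefficients equal to `x(x+1)(x+2)(x+3)(x+4) · g₅`, and the leading factor is a unit of `ℚ(x)`. -/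

theorem RatFunc.X_add_natCast_ne_zero {K : Type*} [Field K] (n : ℕ) :
    RatFunc.X + (n : RatFunc K) ≠ 0 := by
  have h : algebraMap (Polynomial K) (RatFunc K) (Polynomial.X + Polynomial.C (n : K))
      = RatFunc.X + (n : RatFunc K) := by
    rw [map_add, RatFunc.algebraMap_X, RatFunc.algebraMap_C, map_natCast]
  exact h ▸ RatFunc.algebraMap_ne_zero (Polynomial.X_add_C_ne_zero _)

theorem mul_sub_mul_mem_of_forall_le_four_mem {A : Type*} [CommRing A] {I : Ideal A}
    (y : A) (u : ℕ → A) (hI : ∀ k ≤ 4, u k * u (k + 2) - (y + k) * u (k + 1) ∈ I) :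
    y * (y + 1) * (y + 2) * (y + 3) * (y + 4) * u 5
      - (y + 2) * (y + 3) ^ 2 * (y + 4) * (u 0 * u 4) ∈ I := by
  have h0 := hI 0 (by norm_num)
  have h1 := hI 1 (by norm_num)
  have h2 := hI 2 (by norm_num)
  have h3 := hI 3 (by norm_num)
  have h4 := hI 4 (by norm_num)
  push_cast [add_zero] at h0 h1 h2 h3 h4
  have hcomb : y * (y + 1) * (y + 2) * (y + 3) * (y + 4) * u 5
        - (y + 2) * (y + 3) ^ 2 * (y + 4) * (u 0 * u 4)
      = -((y + 3) * (y + 4) * (u 4 * u 5)) * (u 0 * u 2 - y * u 1)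
        + -(y * (y + 4) * (u 5 * u 5)) * (u 1 * u 3 - (y + 1) * u 2)
        + ((y + 3) * (y + 4) * (u 0 * u 5) - y * (y + 1) * (u 5 * u 6))
            * (u 2 * u 4 - (y + 2) * u 3)
        + ((y + 2) * (y + 3) * (y + 4) * u 0 - y * (y + 1) * (y + 2) * u 6
              + y * (y + 4) * (u 1 * u 5))
            * (u 3 * u 5 - (y + 3) * u 4)
        + (-(y * (y + 1) * (y + 2) * (y + 3)) + y * (y + 1) * (u 2 * u 5))
            * (u 4 * u 6 - (y + 4) * u 5) := by
    ring
  rw [hcomb]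
  exact add_mem (add_mem (add_mem (add_mem (I.mul_mem_left _ h0) (I.mul_mem_left _ h1))
    (I.mul_mem_left _ h2)) (I.mul_mem_left _ h3)) (I.mul_mem_left _ h4)

open MvPolynomial in
theorem sigmaO_iterate_gOne (φ : RatFunc ℚ →+* RatFunc ℚ)
    (hφ : φ RatFunc.X = RatFunc.X + 1) (k : ℕ) :
    (⇑(sigmaO φ))^[k] gOne = X k * X (k + 2) - (C RatFunc.X + (k : ODiffRing)) * X (k + 1) := by
  induction k with
  | zero => simp [gOne]
  | succ n ih =>
    rw [Function.iterate_succ_apply', ih]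
    simp only [sigmaO, map_sub, map_mul, map_add, map_natCast, eval₂Hom_X', coe_eval₂Hom,
      eval₂_C, RingHom.comp_apply, hφ, C_1]
    push_cast
    ring

/-- In the ordinary difference polynomial ring with `g₁ = u₀·u₂ − x·u₁`, the
polynomial `g₅ = u₅ − ((x+3)/(x·(x+1)))·u₀·u₄` belongs to the difference ideal
`[g₁]`. -/
theorem gFive_mem_diffIdeal (φ : RatFunc ℚ →+* RatFunc ℚ)
    (hφ : φ RatFunc.X = RatFunc.X + 1) :
    (MvPolynomial.X 5
        - MvPolynomial.C ((RatFunc.X + 3) / (RatFunc.X * (RatFunc.X + 1)))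
          * (MvPolynomial.X 0 * MvPolynomial.X 4)
      : ODiffRing) ∈ diffIdealO φ gOne := by
  open MvPolynomial in
  set x : RatFunc ℚ := RatFunc.X
  have hx : ∀ n : ℕ, x + (n : RatFunc ℚ) ≠ 0 := RatFunc.X_add_natCast_ne_zero
  have hmem := mul_sub_mul_mem_of_forall_le_four_mem (I := diffIdealO φ gOne) (C x) X
    fun k _ => Ideal.subset_span ⟨k, (sigmaO_iterate_gOne φ hφ k).symm⟩
  have hd : x * (x + 1) * (x + 2) * (x + 3) * (x + 4) ≠ 0 := by
    simpa using mul_ne_zero (mul_ne_zero (mul_ne_zero (mul_ne_zero (hx 0) (hx 1)) (hx 2)) (hx 3))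
      (hx 4)
  rw [← Ideal.unit_mul_mem_iff_mem _ ((isUnit_iff_ne_zero.mpr hd).map C)]
  convert hmem using 1
  have hcoeff : x * (x + 1) * (x + 2) * (x + 3) * (x + 4) * ((x + 3) / (x * (x + 1)))
      = (x + 2) * (x + 3) ^ 2 * (x + 4) := by
    have hx0 : x ≠ 0 := by simpa using hx 0
    have hx1 : x + 1 ≠ 0 := by simpa using hx 1
    field_simp
  rw [mul_sub, ← mul_assoc, ← map_mul, hcoeff]
  simp only [map_mul, map_add, map_pow, map_one, map_ofNat]
end
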